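/- arXiv:1801.04923 — 8 statements merged into one kernel-verified Lean document; each statement's English description precedes it below -/
import Mathlib

section
/- Let C be an [n,k] linear code over GF(q) and Λ a ν×n binary matrix such that every column of Λ has Hamming weight exactly κ and the support of every row of Λ contains an information set of C. Then κ/ν ≥ k/n. -/
/-- `I` is an information set of the code generated by `G`: it has size `k` and the
columns of `G` indexed by `I` form an invertible `k × k` matrix. -/
def IsInfoSetG {F : Type*} [Field F] {k n : ℕ} (G : Matrix (Fin k) (Fin n) F)
    (I : Finset (Fin n)) : Prop :=
  I.card = k ∧ ∃ f : Fin k → Fin n, Function.Injective f ∧ (∀ i, f i ∈ I) ∧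
    IsUnit (G.submatrix id f).det

/-- `Λ` is a PIR achievable rate matrix for the code generated by `G`:
every column has Hamming weight `κ` and the support of every row contains an
information set. -/
def IsPIRMatrixG {F : Type*} [Field F] {k n ν : ℕ} (G : Matrix (Fin k) (Fin n) F)
    (Λ : Fin ν → Fin n → Bool) (κ : ℕ) : Prop :=
  (∀ j, (Finset.univ.filter fun u => Λ u j = true).card = κ) ∧
  ∀ u, ∃ I : Finset (Fin n), (∀ j ∈ I, Λ u j = true) ∧ IsInfoSetG G I

/-- if a PIR achievable rate matrix `Λ_{κ,ν}` exists for an `[n,k]` code,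
then `κ/ν ≥ k/n`. -/
theorem pir_rate_matrix_ratio_lower_bound {F : Type*} [Field F] {k n ν κ : ℕ}
    (G : Matrix (Fin k) (Fin n) F) (Λ : Fin ν → Fin n → Bool) (hν : 0 < ν)
    (h : IsPIRMatrixG G Λ κ) :
    (k : ℚ) / n ≤ (κ : ℚ) / ν := by
  rcases Nat.eq_zero_or_pos n with hn | hn
  · subst hn
    simp only [Nat.cast_zero, div_zero]
    positivity
  -- key counting inequality : ν * k ≤ n * κ
  have hrow : ∀ u, k ≤ (Finset.univ.filter fun j => Λ u j = true).card := by
    intro u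
    obtain ⟨I, hI, hcard, -⟩ := h.2 u
    calc k = I.card := hcard.symm
      _ ≤ _ := Finset.card_le_card fun j hj =>
          Finset.mem_filter.mpr ⟨Finset.mem_univ j, hI j hj⟩
  have hkey : ν * k ≤ n * κ := by
    calc ν * k = ∑ _u : Fin ν, k := by simp [mul_comm]
      _ ≤ ∑ u : Fin ν, (Finset.univ.filter fun j => Λ u j = true).card :=
          Finset.sum_le_sum fun u _ => hrow u
      _ = ∑ u : Fin ν, ∑ j : Fin n, if Λ u j = true then 1 else 0 := by
          simp only [Finset.card_filter]
      _ = ∑ j : Fin n, ∑ u : Fin ν, if Λ u j = true then 1 else 0 :=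
          Finset.sum_comm
      _ = ∑ j : Fin n, (Finset.univ.filter fun u => Λ u j = true).card := by
          simp only [Finset.card_filter]
      _ = ∑ _j : Fin n, κ := by
          exact Finset.sum_congr rfl fun j _ => h.1 j
      _ = n * κ := by simp [mul_comm]
  rw [div_le_div_iff₀ (by exact_mod_cast hn) (by exact_mod_cast hν)]
  have := (Nat.cast_le (α := ℚ)).mpr hkey
  push_cast at this ⊢
  linarith
end

section
/- Let C be an [n,k] code with PIR achievable rate matrix Λ_{κ,ν}, with interference matrices A (κ×n, listing per column the row indices u with Λ_{u,j}=1) and B ((ν−κ)×n, listing per column the row indices u with Λ_{u,j}=0). Then for every entry b_{i,j} of B, the set S(b_{i,j}|A) is contained in {1,...,n}\{j} and contains an information set of C. -/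
/-- for every entry `b_{i,j}` of the interference matrix `B`, the set
`S(b_{i,j}|A)` is contained in `{1,…,n} \ {j}` and contains an information set. -/
theorem interference_matrix_B_entry_set {F : Type*} [Field F] {k n ν κ : ℕ}
    (G : Matrix (Fin k) (Fin n) F) (Λ : Fin ν → Fin n → Bool)
    (h : IsPIRMatrixG G Λ κ)
    (A : Fin κ → Fin n → Fin ν) (B : Fin (ν - κ) → Fin n → Fin ν)
    (hA : ∀ j u, (∃ i, A i j = u) ↔ Λ u j = true)
    (hB : ∀ j u, (∃ i, B i j = u) ↔ Λ u j = false) :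
    ∀ (i : Fin (ν - κ)) (j : Fin n),
      (∀ j' : Fin n, (∃ i', A i' j' = B i j) → j' ≠ j) ∧
      ∃ I : Finset (Fin n), (∀ j' ∈ I, ∃ i', A i' j' = B i j) ∧ IsInfoSetG G I := by
  intro i j
  have hfalse : Λ (B i j) j = false := (hB j (B i j)).mp ⟨i, rfl⟩
  constructor
  · intro j' hex hj
    rw [hj] at hex
    have := (hA j (B i j)).mp hex
    simp [hfalse] at this
  · obtain ⟨I, hI1, hI2⟩ := h.2 (B i j)
    exact ⟨I, fun j' hj' => (hA j' (B i j)).mpr (hI1 j' hj'), hI2⟩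
end

section
/- Let f ≥ 1, n > k ≥ 1. Suppose for an [n,k] code C there exists a PIR achievable rate matrix with parameters κ, ν. Then the PIR rate R(C) = ((ν−κ)k/(κn)) · (1 − (κ/ν)^f)^{-1} satisfies R(C) ≤ ((n−k)/n) · (1 − (k/n)^f)^{-1}, i.e., R(C) is at most the MDS-PIR capacity C_f. -/
lemma geom_aux (z : ℝ) (f : ℕ) :
    1 - z ^ f = (1 - z) * ∑ i ∈ Finset.range f, z ^ i := by
  linear_combination geom_sum_mul z f

lemma key_real_ineq {k n κ ν f : ℕ} (hk : 1 ≤ k) (hkn : k < n) (hf : 1 ≤ f)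
    (hκ : 1 ≤ κ) (hκν : κ ≤ ν) (hcount : ν * k ≤ n * κ) :
    ((ν : ℝ) - κ) * k / (κ * n) * (1 - ((κ : ℝ) / ν) ^ f)⁻¹ ≤
      ((n : ℝ) - k) / n * (1 - ((k : ℝ) / n) ^ f)⁻¹ := by
  have hn' : 0 < n := by omega
  have hn0 : (0:ℝ) < n := by exact_mod_cast hn'
  have hk0 : (0:ℝ) < k := by exact_mod_cast hk
  have hκ0 : (0:ℝ) < κ := by exact_mod_cast hκ
  have hν0 : (0:ℝ) < ν := lt_of_lt_of_le hκ0 (by exact_mod_cast hκν)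
  set y : ℝ := (k:ℝ)/n with hy
  set x : ℝ := (κ:ℝ)/ν with hx
  have hy0 : 0 < y := by rw [hy]; positivity
  have hy1 : y < 1 := by rw [hy, div_lt_one hn0]; exact_mod_cast hkn
  have hx0 : 0 < x := by rw [hx]; positivity
  have hx1 : x ≤ 1 := by rw [hx, div_le_one hν0]; exact_mod_cast hκν
  have hyx : y ≤ x := by
    rw [hy, hx, div_le_div_iff₀ hn0 hν0]
    calc (k:ℝ) * ν = ν * k := by ring
    _ ≤ n * κ := by exact_mod_cast hcount
    _ = κ * n := by ring
  set Sy : ℝ := ∑ i ∈ Finset.range f, y ^ i with hSy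
  set Sx : ℝ := ∑ i ∈ Finset.range f, x ^ i with hSx
  have hSy0 : 0 < Sy := by
    rw [hSy]
    exact Finset.sum_pos (fun i _ => by positivity) ⟨0, Finset.mem_range.mpr hf⟩
  have hSx0 : 0 < Sx := by
    rw [hSx]
    exact Finset.sum_pos (fun i _ => by positivity) ⟨0, Finset.mem_range.mpr hf⟩
  have hgy : 1 - y ^ f = (1 - y) * Sy := geom_aux y f
  have hgx : 1 - x ^ f = (1 - x) * Sx := geom_aux x f
  have hL : ((ν : ℝ) - κ) * k / (κ * n) = (1 - x) * y / x := by
    rw [hx, hy]; field_simp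
  have hR : ((n : ℝ) - k) / n = 1 - y := by
    rw [hy]; field_simp
  have h1y : 0 < 1 - y := by linarith
  have hER : (1 - y) * ((1 - y) * Sy)⁻¹ = 1 / Sy := by
    field_simp
  rw [hL, hR, hgx, hgy, hER]
  rcases eq_or_lt_of_le hx1 with hx1' | hx1'
  · rw [hx1', sub_self]
    simp
    exact hSy0.le
  · have h1x : 0 < 1 - x := by linarith
    have hEL : (1 - x) * y / x * ((1 - x) * Sx)⁻¹ = y / (x * Sx) := by
      field_simp
    rw [hEL, div_le_div_iff₀ (by positivity) hSy0]
    have hsum : Sy ≤ Sx := by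
      rw [hSy, hSx]
      exact Finset.sum_le_sum fun i _ => pow_le_pow_left₀ hy0.le hyx i
    nlinarith


lemma pir_counting {F : Type*} [Field F] {k n ν κ : ℕ}
    (G : Matrix (Fin k) (Fin n) F) (Λ : Fin ν → Fin n → Bool)
    (hk : 1 ≤ k) (hkn : k < n) (hν : 0 < ν)
    (h : IsPIRMatrixG G Λ κ) :
    1 ≤ κ ∧ κ ≤ ν ∧ ν * k ≤ n * κ := by
  obtain ⟨hcol, hrow⟩ := h
  have hn : 0 < n := by omega
  refine ⟨?_, ?_, ?_⟩
  · obtain ⟨I, hI, hIcard, _⟩ := hrow ⟨0, hν⟩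
    have hne : I.Nonempty := by
      rw [← Finset.card_pos, hIcard]; omega
    obtain ⟨j, hj⟩ := hne
    rw [← hcol j]
    exact Finset.card_pos.mpr ⟨⟨0, hν⟩, Finset.mem_filter.mpr ⟨Finset.mem_univ _, hI j hj⟩⟩
  · rw [← hcol ⟨0, hn⟩]
    exact (Finset.card_filter_le _ _).trans (by simp)
  · have key : ∀ u : Fin ν, k ≤ (Finset.univ.filter fun j => Λ u j = true).card := by
      intro u
      obtain ⟨I, hI, hIcard, _⟩ := hrow u
      calc k = I.card := hIcard.symm
      _ ≤ _ := Finset.card_le_card (fun j hj => Finset.mem_filter.mpr ⟨Finset.mem_univ j, hI j hj⟩)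
    calc ν * k = ∑ _u : Fin ν, k := by simp [mul_comm]
    _ ≤ ∑ u : Fin ν, (Finset.univ.filter fun j => Λ u j = true).card :=
        Finset.sum_le_sum fun u _ => key u
    _ = ∑ u : Fin ν, ∑ j : Fin n, if Λ u j = true then 1 else 0 := by
        simp only [Finset.card_filter]
    _ = ∑ j : Fin n, ∑ u : Fin ν, if Λ u j = true then 1 else 0 := Finset.sum_comm
    _ = ∑ j : Fin n, (Finset.univ.filter fun u => Λ u j = true).card := by
        simp only [Finset.card_filter]
    _ = ∑ _j : Fin n, κ := by simp [hcol]
    _ = n * κ := by simp [mul_comm]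

/-- the PIR rate of the protocol is at most the MDS-PIR capacity. -/
theorem pir_rate_le_mds_pir_capacity {F : Type*} [Field F] {k n ν κ : ℕ}
    (G : Matrix (Fin k) (Fin n) F) (Λ : Fin ν → Fin n → Bool)
    (hk : 1 ≤ k) (hkn : k < n) (f : ℕ) (hf : 1 ≤ f) (hν : 0 < ν)
    (h : IsPIRMatrixG G Λ κ) :
    ((ν : ℝ) - κ) * k / (κ * n) * (1 - ((κ : ℝ) / ν) ^ f)⁻¹ ≤
      ((n : ℝ) - k) / n * (1 - ((k : ℝ) / n) ^ f)⁻¹ := by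
  obtain ⟨hκ1, hκν, hcount⟩ := pir_counting G Λ hk hkn hν h
  exact key_real_ineq hk hkn hf hκ1 hκν hcount
end

section
/- If an [n,k] code C admits a PIR achievable rate matrix Λ_{κ,ν} with κ/ν = k/n (an MDS-PIR capacity-achieving matrix), then the s-th generalized Hamming weight satisfies d_s^C ≥ (n/k)·s for all s ∈ {1,...,k}. -/
/-!
Let `D ≤ C` be an `s`-dimensional subcode whose support `T` realises `d_s`. Count the pairs
`(u, j)` with `j ∈ T` and `Λ u j = 1`. The support of row `u` contains an information set, on
which `D` restricts injectively, so row `u` meets `T` in at least `s` coordinates; each column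
has weight `κ`. Hence `ν s ≤ κ d_s`, and `κ / ν = k / n` turns this into `n s ≤ k d_s`.
-/

/-- `I` is an information set of the `[n,k]` code `C`: it has size `k` and a codeword
vanishing on `I` is zero (so the projection of `C` onto the coordinates in `I` is a
bijection onto `F^I`). -/
def IsInfoSet {F : Type*} [Field F] {n : ℕ} (C : Submodule F (Fin n → F)) (k : ℕ)
    (I : Finset (Fin n)) : Prop :=
  I.card = k ∧ ∀ x ∈ C, (∀ j ∈ I, x j = 0) → x = 0

/-- `Λ` is a PIR achievable rate matrix for the `[n,k]` code `C`: every column has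
Hamming weight `κ` and the support of every row contains an information set. -/
def IsPIRMatrix {F : Type*} [Field F] {n ν : ℕ} (C : Submodule F (Fin n → F))
    (k κ : ℕ) (Λ : Fin ν → Fin n → Bool) : Prop :=
  (∀ j, (Finset.univ.filter fun u => Λ u j = true).card = κ) ∧
  ∀ u, ∃ I : Finset (Fin n), (∀ j ∈ I, Λ u j = true) ∧ IsInfoSet C k I

/-- The `s`-th generalized Hamming weight of the code `C`: the smallest support size of
an `s`-dimensional subcode of `C`. -/
noncomputable def genHammingWeight {F : Type*} [Field F] {n : ℕ}
    (C : Submodule F (Fin n → F)) (s : ℕ) : ℕ :=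
  sInf {c | ∃ D : Submodule F (Fin n → F), D ≤ C ∧ Module.finrank F D = s ∧
    c = Set.ncard {j | ∃ x ∈ D, x j ≠ 0}}

open Finset

theorem Submodule.exists_le_and_finrank_eq {K V : Type*} [DivisionRing K] [AddCommGroup V]
    [Module K V] (C : Submodule K V) {s : ℕ} (hs : s ≤ Module.finrank K C) :
    ∃ D ≤ C, Module.finrank K D = s := by
  obtain ⟨f, hf⟩ := exists_linearIndependent_of_le_finrank hs
  refine ⟨Submodule.span K (Set.range (C.subtype ∘ f)), ?_, ?_⟩
  · rw [Submodule.span_le, Set.range_comp]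
    exact fun _ ⟨x, _, hx⟩ => hx ▸ x.2
  · rw [finrank_span_eq_card (hf.map' C.subtype C.ker_subtype), Fintype.card_fin]

theorem Submodule.finrank_le_card_of_forall_vanishing_eq_zero {K ι : Type*} [DivisionRing K]
    (D : Submodule K (ι → K)) (J : Finset ι) (hJ : ∀ x ∈ D, (∀ j ∈ J, x j = 0) → x = 0) :
    Module.finrank K D ≤ #J := by
  let restrict : D →ₗ[K] (J → K) := (LinearMap.funLeft K K Subtype.val).comp D.subtype
  have : Function.Injective restrict := by
    rw [← LinearMap.ker_eq_bot, LinearMap.ker_eq_bot']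
    intro x hx
    exact Subtype.ext <| hJ x x.2 fun j hj => congrFun hx ⟨j, hj⟩
  simpa using LinearMap.finrank_le_finrank_of_injective this

theorem exists_finrank_eq_and_genHammingWeight_eq {F : Type*} [Field F] {n : ℕ}
    (C : Submodule F (Fin n → F)) {s : ℕ} (hs : s ≤ Module.finrank F C) :
    ∃ D ≤ C, Module.finrank F D = s ∧
      genHammingWeight C s = Set.ncard {j | ∃ x ∈ D, x j ≠ 0} := by
  obtain ⟨D, hDC, hD⟩ := C.exists_le_and_finrank_eq hs
  have hne : {c | ∃ D ≤ C, Module.finrank F D = s ∧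
      c = Set.ncard {j | ∃ x ∈ D, x j ≠ 0}}.Nonempty := ⟨_, D, hDC, hD, rfl⟩
  exact Nat.sInf_mem hne

theorem IsPIRMatrix.mul_finrank_le_mul_ncard_support {F : Type*} [Field F] {n ν k κ : ℕ}
    {C : Submodule F (Fin n → F)} {Λ : Fin ν → Fin n → Bool} (h : IsPIRMatrix C k κ Λ)
    {D : Submodule F (Fin n → F)} (hDC : D ≤ C) :
    ν * Module.finrank F D ≤ κ * Set.ncard {j | ∃ x ∈ D, x j ≠ 0} := by
  classical
  have hrow (u : Fin ν) : Module.finrank F D ≤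
      #({j | ∃ x ∈ D, x j ≠ 0}.toFinset.bipartiteAbove (fun u j => Λ u j = true) u) := by
    obtain ⟨I, hIΛ, -, hI⟩ := h.2 u
    -- on `I`, outside the support of `D` every codeword of `D` vanishes anyway
    refine D.finrank_le_card_of_forall_vanishing_eq_zero _ fun x hx hxJ =>
      hI x (hDC hx) fun j hj => ?_
    by_contra hxj
    exact hxj <| hxJ j <| (mem_bipartiteAbove _).2 ⟨Set.mem_toFinset.2 ⟨x, hx, hxj⟩, hIΛ j hj⟩
  rw [Set.ncard_eq_toFinset_card', mul_comm κ]
  simpa using card_mul_le_card_mul _ (fun u _ => hrow u) fun j _ => (h.1 j).le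

/-- if an `[n,k]` code admits an MDS-PIR capacity-achieving matrix
(`κ/ν = k/n`), then `d_s ≥ (n/k)·s` for all `s ∈ {1,…,k}`. -/
theorem genHammingWeight_lower_bound_of_capacity_achieving {F : Type*} [Field F]
    {n ν k κ : ℕ} (C : Submodule F (Fin n → F)) (hk : Module.finrank F C = k)
    (Λ : Fin ν → Fin n → Bool) (hν : 0 < ν) (h : IsPIRMatrix C k κ Λ)
    (hratio : κ * n = k * ν) :
    ∀ s : ℕ, 1 ≤ s → s ≤ k →
      ((n : ℚ) / k) * s ≤ (genHammingWeight C s : ℚ) := by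
  intro s hs1 hsk
  obtain ⟨D, hDC, hD, hd⟩ := exists_finrank_eq_and_genHammingWeight_eq C (hk ▸ hsk)
  have hcount := h.mul_finrank_le_mul_ncard_support hDC
  rw [hD, ← hd] at hcount
  have hnat : n * s ≤ k * genHammingWeight C s := by
    refine Nat.le_of_mul_le_mul_left ?_ hν
    calc ν * (n * s) = n * (ν * s) := by ring
      _ ≤ n * (κ * genHammingWeight C s) := Nat.mul_le_mul_left n hcount
      _ = ν * (k * genHammingWeight C s) := by rw [← mul_assoc, mul_comm n, hratio]; ring
  have hk0 : (0 : ℚ) < k := by exact_mod_cast hs1.trans hsk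
  rw [div_mul_eq_mul_div, div_le_iff₀ hk0]
  exact_mod_cast (mul_comm k _ ▸ hnat)
end

section
/- Let C be an [n,k] code. If there exist n automorphisms π_1,...,π_n of C (permutations of coordinates mapping C onto itself) such that for every coordinate j ∈ {1,...,n}, the multiset {π_1(j),...,π_n(j)} equals {1,...,n}, then C admits an MDS-PIR capacity-achieving matrix, i.e., a PIR achievable rate matrix Λ_{κ,ν} with κ/ν = k/n. -/
open Module Submodule in
lemma exists_infoSet {F : Type*} [Field F] {n k : ℕ} (C : Submodule F (Fin n → F))
    (hk : Module.finrank F C = k) : ∃ I : Finset (Fin n), IsInfoSet C k I := by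
  classical
  haveI : FiniteDimensional F C := FiniteDimensional.finiteDimensional_submodule C
  -- the coordinate functionals on C
  set f : Fin n → Module.Dual F C := fun j => (LinearMap.proj j).comp C.subtype with hf
  have hsep : (span F (Set.range f)).dualCoannihilator = ⊥ := by
    rw [eq_bot_iff]
    intro x hx
    rw [Submodule.mem_dualCoannihilator] at hx
    have : ∀ j, x.1 j = 0 := fun j => hx (f j) (subset_span ⟨j, rfl⟩)
    have : x = 0 := Subtype.ext (funext this)
    simp [this]
  have hspan : span F (Set.range f) = ⊤ := by
    have := congrArg Submodule.dualAnnihilator hsep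
    rwa [Subspace.dualCoannihilator_dualAnnihilator_eq, Submodule.dualAnnihilator_bot] at this
  obtain ⟨t, hts, htspan, htind⟩ := exists_linearIndependent F (Set.range f)
  rw [hspan] at htspan
  have htfin : t.Finite := htind.setFinite
  -- basis of the dual
  let b : Basis t F (Module.Dual F C) := Basis.mk htind (by rw [Subtype.range_coe, htspan])
  haveI : Fintype t := htfin.fintype
  have hcard : Fintype.card t = k := by
    rw [← Module.finrank_eq_card_basis b, Subspace.dual_finrank_eq, hk]
  -- choose indices
  have hchoice : ∀ g : t, ∃ j : Fin n, f j = (g : Module.Dual F C) := fun g => hts g.2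
  choose c hc using hchoice
  have hcinj : Function.Injective c := by
    intro g g' h
    have : (g : Module.Dual F C) = g' := by rw [← hc g, ← hc g', h]
    exact Subtype.ext this
  refine ⟨Finset.univ.image c, ?_, ?_⟩
  · rw [Finset.card_image_of_injective _ hcinj, Finset.card_univ, hcard]
  · intro x hx hzero
    have hall : ∀ g : t, (g : Module.Dual F C) ⟨x, hx⟩ = 0 := by
      intro g
      have := hzero (c g) (Finset.mem_image_of_mem c (Finset.mem_univ g))
      rw [← hc g]
      exact this
    have hphi : ∀ φ : Module.Dual F C, φ ⟨x, hx⟩ = 0 := by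
      intro φ
      have hφ : φ ∈ span F t := by rw [htspan]; trivial
      induction hφ using Submodule.span_induction with
      | mem g hg => exact hall ⟨g, hg⟩
      | zero => simp
      | add _ _ _ _ h1 h2 => simp [h1, h2]
      | smul a _ _ h => simp [h]
    have : (⟨x, hx⟩ : C) = 0 := (Module.forall_dual_apply_eq_zero_iff F _).mp hphi
    exact congrArg Subtype.val this

/-- if an `[n,k]` code `C` has `n` automorphisms `π_1,…,π_n` such that
for every coordinate `j` the values `π_1(j),…,π_n(j)` exhaust `{1,…,n}`, then `C`
admits an MDS-PIR capacity-achieving matrix, i.e. a PIR achievable rate matrix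
`Λ_{κ,ν}` with `κ/ν = k/n`. -/
theorem capacity_achieving_of_transitive_automorphisms {F : Type*} [Field F]
    {n k : ℕ} (C : Submodule F (Fin n → F)) (hk : Module.finrank F C = k)
    (π : Fin n → Equiv.Perm (Fin n))
    (haut : ∀ l : Fin n, ∀ x : Fin n → F, x ∈ C ↔ (fun j => x (π l j)) ∈ C)
    (htrans : ∀ j : Fin n, Function.Bijective fun l => π l j) :
    ∃ (ν κ : ℕ) (Λ : Fin ν → Fin n → Bool), 0 < ν ∧ IsPIRMatrix C k κ Λ ∧
      κ * n = k * ν := by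
  classical
  obtain ⟨I, hIcard, hIinfo⟩ := exists_infoSet C hk
  rcases Nat.eq_zero_or_pos n with hn | hn
  · -- degenerate case n = 0
    subst hn
    have hk0 : k = 0 := by
      have h1 : Module.finrank F C ≤ Module.finrank F (Fin 0 → F) :=
        Submodule.finrank_le C
      simp [hk] at h1
      omega
    refine ⟨1, 0, fun _ _ => false, one_pos, ⟨fun j => j.elim0, fun u => ?_⟩, by simp [hk0]⟩
    exact ⟨∅, fun j hj => absurd hj (Finset.notMem_empty j),
      by simp [hk0], fun x _ _ => funext fun j => j.elim0⟩
  · refine ⟨n, k, fun l j => decide (π l j ∈ I), hn, ⟨?_, ?_⟩, mul_comm k n ▸ rfl⟩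
    · -- column weights
      intro j
      rw [← hIcard]
      apply Finset.card_bij (fun l _ => π l j)
      · intro l hl
        simpa using hl
      · intro l1 h1 l2 h2 h
        exact (htrans j).1 h
      · intro i hi
        obtain ⟨l, hl⟩ := (htrans j).2 i
        exact ⟨l, by simpa [hl] using hi, hl⟩
    · -- rows contain information sets
      intro l
      refine ⟨I.image (fun i => (π l).symm i), ?_, ?_, ?_⟩
      · intro j hj
        obtain ⟨i, hi, rfl⟩ := Finset.mem_image.mp hj
        simpa using hi
      · rw [Finset.card_image_of_injective _ (π l).symm.injective, hIcard]
      · intro x hx hzero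
        set y : Fin n → F := fun j => x ((π l).symm j) with hy
        have hyC : y ∈ C := by
          rw [haut l y]
          convert hx using 1
          funext j
          simp [hy]
        have hy0 : y = 0 := by
          apply hIinfo y hyC
          intro i hi
          exact hzero ((π l).symm i) (Finset.mem_image_of_mem _ hi)
        funext j
        have := congrFun hy0 (π l j)
        simpa [hy] using this
end

section
/- Every cyclic [n,k] code C admits n automorphisms π_1,...,π_n (the n cyclic shifts) such that for every coordinate j, {π_1(j),...,π_n(j)} = {1,...,n}; hence every cyclic code admits an MDS-PIR capacity-achieving matrix Λ_{κ,ν} with κ/ν = k/n. -/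
/-!
A cyclic code is invariant under the shifts `j ↦ j + l`, and for a fixed coordinate `j` the map
`l ↦ j + l` is a bijection. For any such family of automorphisms `π_u` and any information set `I`,
the matrix whose row `u` is the indicator of `π_u⁻¹(I)` is a PIR matrix with `κ = k`, `ν = n`:
row `u` is supported on the information set `π_u⁻¹(I)`, and column `j` has weight
`#{u | π_u j ∈ I} = #I = k`.
-/

section

open Finset

variable {F : Type*} [Field F] {n : ℕ}

def IsPermAut (C : Submodule F (Fin n → F)) (σ : Equiv.Perm (Fin n)) : Prop :=
  ∀ x : Fin n → F, x ∈ C ↔ x ∘ σ ∈ C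

theorem IsInfoSet.map_perm_symm {C : Submodule F (Fin n → F)} {k : ℕ} {I : Finset (Fin n)}
    {σ : Equiv.Perm (Fin n)} (hσ : IsPermAut C σ) (hI : IsInfoSet C k I) :
    IsInfoSet C k (I.map σ.symm.toEmbedding) := by
  refine ⟨(card_map _).trans hI.1, fun x hx hvanish => ?_⟩
  have hxσ : x ∘ σ.symm ∈ C := (hσ _).2 (by simpa [Function.comp_def] using hx)
  have : x ∘ σ.symm = 0 := hI.2 _ hxσ fun i hi => hvanish _ (by simpa [mem_map_equiv] using hi)
  funext j
  simpa using congrFun this (σ j)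

/-- A maximal linearly independent subfamily of the coordinate functionals on `C` is indexed by
an information set: it spans all of them, and it has at most `dim C* = dim C` members. -/
theorem exists_isInfoSet (C : Submodule F (Fin n → F)) :
    ∃ I, IsInfoSet C (Module.finrank F C) I := by
  classical
  let coord : Fin n → Module.Dual F C := fun j => (LinearMap.proj j).comp C.subtype
  obtain ⟨b, -, -, hspan, hli⟩ :=
    exists_linearIndepOn_extension (linearIndepOn_empty F coord) (Set.empty_subset Set.univ)
  have hvanish : ∀ x ∈ C, (∀ j ∈ b.toFinset, x j = 0) → x = 0 := by
    intro x hx hxb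
    have hker : Submodule.span F (coord '' b) ≤ LinearMap.ker (Module.Dual.eval F C ⟨x, hx⟩) :=
      Submodule.span_le.2 <| by
        rintro _ ⟨j, hj, rfl⟩
        exact hxb j (Set.mem_toFinset.2 hj)
    funext j
    exact hker (hspan ⟨j, Set.mem_univ j, rfl⟩)
  have hres : Function.Injective (LinearMap.pi fun j : b => coord j) := by
    rw [← LinearMap.ker_eq_bot, Submodule.eq_bot_iff]
    rintro ⟨x, hx⟩ hx0
    exact Subtype.ext <| hvanish x hx fun j hj => congrFun hx0 ⟨j, Set.mem_toFinset.1 hj⟩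
  refine ⟨b.toFinset, le_antisymm ?_ ?_, hvanish⟩
  · simpa using hli.fintype_card_le_finrank
  · simpa using LinearMap.finrank_le_finrank_of_injective hres

theorem isPIRMatrix_of_isPermAut_of_bijective {C : Submodule F (Fin n → F)} {k : ℕ}
    {I : Finset (Fin n)} {ν : ℕ} {π : Fin ν → Equiv.Perm (Fin n)} (hπ : ∀ u, IsPermAut C (π u))
    (hπj : ∀ j, Function.Bijective fun u => π u j) (hI : IsInfoSet C k I) :
    IsPIRMatrix C k k fun u j => decide (π u j ∈ I) := by
  refine ⟨fun j => ?_, fun u => ⟨_, fun j hj => ?_, hI.map_perm_symm (hπ u)⟩⟩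
  · rw [← hI.1]
    exact card_equiv (Equiv.ofBijective _ (hπj j)) (by simp)
  · simpa [mem_map_equiv] using hj

theorem comp_add_mem_of_comp_add_one_mem {β : Type*} [NeZero n] {S : Set (Fin n → β)}
    (hS : ∀ x ∈ S, (fun j => x (j + 1)) ∈ S) (c : Fin n) :
    ∀ x ∈ S, (fun j => x (j + c)) ∈ S := by
  obtain ⟨m, rfl⟩ := Nat.exists_eq_succ_of_ne_zero (NeZero.ne n)
  induction c using Fin.induction with
  | zero => simp
  | succ c ih =>
    intro x hx
    simpa only [← Fin.coeSucc_eq_succ, ← add_assoc] using ih _ (hS x hx)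

theorem isPermAut_addRight [NeZero n] {C : Submodule F (Fin n → F)}
    (hC : ∀ x ∈ C, (fun j => x (j + 1)) ∈ C) (c : Fin n) : IsPermAut C (Equiv.addRight c) := by
  refine fun x => ⟨comp_add_mem_of_comp_add_one_mem hC c x, fun hx => ?_⟩
  simpa using comp_add_mem_of_comp_add_one_mem hC (-c) _ hx

end

/-- every cyclic `[n,k]` code has `n` automorphisms (the cyclic shifts)
whose values at each fixed coordinate exhaust all coordinates; hence it admits an
MDS-PIR capacity-achieving matrix `Λ_{κ,ν}` with `κ/ν = k/n`. -/
theorem cyclic_code_capacity_achieving {F : Type*} [Field F] {n k : ℕ} [NeZero n]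
    (C : Submodule F (Fin n → F)) (hk : Module.finrank F C = k)
    (hcyc : ∀ x ∈ C, (fun j : Fin n => x (j + 1)) ∈ C) :
    (∃ π : Fin n → Equiv.Perm (Fin n),
      (∀ l, ∀ x : Fin n → F, x ∈ C ↔ (fun j => x (π l j)) ∈ C) ∧
      (∀ j : Fin n, Function.Bijective fun l => π l j)) ∧
    ∃ (ν κ : ℕ) (Λ : Fin ν → Fin n → Bool), 0 < ν ∧ IsPIRMatrix C k κ Λ ∧
      κ * n = k * ν := by
  have haut : ∀ l, IsPermAut C (Equiv.addRight l) := isPermAut_addRight hcyc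
  have hbij : ∀ j : Fin n, Function.Bijective fun l => Equiv.addRight l j :=
    fun j => (Equiv.addLeft j).bijective
  obtain ⟨I, hI⟩ := exists_isInfoSet C
  exact ⟨⟨_, haut, hbij⟩, n, k, _, NeZero.pos n,
    isPIRMatrix_of_isPermAut_of_bijective haut hbij (hk ▸ hI), rfl⟩
end

section
/- Let C be an [n,k] MDS code. Then C admits a PIR achievable rate matrix Λ_{k,n}: the n×n binary matrix whose i-th row is the indicator vector of the cyclic shift by i of {1,...,k} has all column weights k and each row support is an information set; moreover k/n = k/n, so every MDS code is MDS-PIR capacity-achieving. -/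
open Finset

lemma card_filter_comp_sub_right {G : Type*} [AddGroup G] [Fintype G] (p : G → Prop)
    [DecidablePred p] (i : G) : #{j | p (j - i)} = #{j | p j} :=
  card_equiv (Equiv.subRight i) (by simp)

lemma card_filter_comp_sub_left {G : Type*} [AddGroup G] [Fintype G] (p : G → Prop)
    [DecidablePred p] (j : G) : #{i | p (j - i)} = #{i | p i} :=
  card_equiv (Equiv.subLeft j) (by simp)

lemma card_cyclic_window {n k : ℕ} (hkn : k ≤ n) (i : Fin n) :
    #{j : Fin n | (j - i).val < k} = k := by
  have : NeZero n := ⟨i.pos.ne'⟩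
  rw [card_filter_comp_sub_right (fun j : Fin n => j.val < k), Fin.card_filter_val_lt,
    min_eq_right hkn]

lemma card_cyclic_window_containing {n k : ℕ} (hkn : k ≤ n) (j : Fin n) :
    #{i : Fin n | (j - i).val < k} = k := by
  have : NeZero n := ⟨j.pos.ne'⟩
  rw [card_filter_comp_sub_left (fun i : Fin n => i.val < k), Fin.card_filter_val_lt,
    min_eq_right hkn]

theorem mds_code_capacity_achieving_general {F : Type*} [Field F] {n k : ℕ}
    (C : Submodule F (Fin n → F)) (hkn : k ≤ n)
    (hMDS : ∀ I : Finset (Fin n), I.card = k → IsInfoSet C k I) :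
    IsPIRMatrix C k k (fun i j : Fin n => decide ((j - i : Fin n).val < k)) ∧
    (∀ i : Fin n, IsInfoSet C k
      (Finset.univ.filter fun j : Fin n => ((j - i : Fin n).val < k))) ∧
    (k : ℚ) / n = (k : ℚ) / n := by
  have hinfo (i : Fin n) : IsInfoSet C k {j : Fin n | (j - i).val < k} :=
    hMDS _ (card_cyclic_window hkn i)
  refine ⟨⟨fun j => ?_, fun i => ⟨_, fun j hj => ?_, hinfo i⟩⟩, hinfo, rfl⟩
  · simpa using card_cyclic_window_containing hkn j
  · simpa using (mem_filter.mp hj).2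

/-- for an `[n,k]` MDS code (every `k`-subset of coordinates is an
information set), the `n × n` binary matrix whose `i`-th row is the indicator of the
cyclic shift by `i` of `{1,…,k}` is a PIR achievable rate matrix with `κ = k`,
`ν = n`, and moreover each of its row supports is itself an information set; since
`k/n = k/n`, every MDS code is MDS-PIR capacity-achieving. -/
theorem mds_code_capacity_achieving {F : Type*} [Field F] {n k : ℕ}
    (C : Submodule F (Fin n → F)) (hk : Module.finrank F C = k)
    (hk0 : 0 < k) (hkn : k ≤ n)
    (hMDS : ∀ I : Finset (Fin n), I.card = k → IsInfoSet C k I) :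
    IsPIRMatrix C k k (fun i j : Fin n => decide ((j - i : Fin n).val < k)) ∧
    (∀ i : Fin n, IsInfoSet C k
      (Finset.univ.filter fun j : Fin n => ((j - i : Fin n).val < k))) ∧
    (k : ℚ) / n = (k : ℚ) / n :=
  mds_code_capacity_achieving_general C hkn hMDS
end

section
/- Let C be an [n,k,d] code with d = d_min^C. Then the PIR rate (min(k, d−1)/n) · (1 − (k/(k+min(k,d−1)))^f)^{-1} is at most the MDS-PIR capacity ((n−k)/n)(1−(k/n)^f)^{-1}, for all f ≥ 1. -/
/-!
Write `r(x) = (1 - x) / (1 - x ^ f) = 1 / (1 + x + ⋯ + x ^ (f - 1))`, which is antitone on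
`[0, 1)`. With `t = min(k, d - 1)` the rate is `((k + t) / n) · r(k / (k + t))` and the capacity
is `r(k / n)`. The Singleton bound `d ≤ n - k + 1` gives `k + t ≤ n`, hence `(k + t) / n ≤ 1`
and `k / n ≤ k / (k + t)`.
-/

open Finset Module

section GeometricRate

variable {K : Type*} [Field K]

theorem one_sub_mul_inv_one_sub_pow {x : K} (hx : x ≠ 1) (f : ℕ) :
    (1 - x) * (1 - x ^ f)⁻¹ = (∑ i ∈ range f, x ^ i)⁻¹ := by
  rw [← mul_neg_geom_sum, mul_inv, mul_inv_cancel_left₀ (sub_ne_zero.2 hx.symm)]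

variable [LinearOrder K] [IsStrictOrderedRing K]

theorem one_sub_mul_inv_one_sub_pow_le {x y : K} {f : ℕ} (hy : 0 ≤ y) (hyx : y ≤ x)
    (hx : x < 1) (hf : f ≠ 0) :
    (1 - x) * (1 - x ^ f)⁻¹ ≤ (1 - y) * (1 - y ^ f)⁻¹ := by
  rw [one_sub_mul_inv_one_sub_pow hx.ne, one_sub_mul_inv_one_sub_pow (hyx.trans_lt hx).ne]
  exact inv_anti₀ (geom_sum_pos hy hf)
    (sum_le_sum fun i _ => pow_le_pow_left₀ hy hyx i)

theorem div_mul_inv_one_sub_pow_le_of_add_le {k t n : K} {f : ℕ} (hk : 0 < k) (ht : 0 ≤ t)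
    (hkt : k + t ≤ n) (hf : f ≠ 0) :
    t / n * (1 - (k / (k + t)) ^ f)⁻¹ ≤ (n - k) / n * (1 - (k / n) ^ f)⁻¹ := by
  have hn : 0 < n := by linarith
  rcases ht.eq_or_lt with rfl | ht
  · have hkn : k / n ≤ 1 := (div_le_one hn).2 (by linarith)
    rw [zero_div, zero_mul]
    exact mul_nonneg (div_nonneg (by linarith) hn.le)
      (inv_nonneg.2 (sub_nonneg.2 (pow_le_one₀ (by positivity) hkn)))
  set x := k / (k + t)
  have hx : x < 1 := (div_lt_one (by linarith)).2 (by linarith)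
  have hrate_nonneg : 0 ≤ (1 - x) * (1 - x ^ f)⁻¹ := by
    rw [one_sub_mul_inv_one_sub_pow hx.ne]
    positivity
  calc t / n * (1 - x ^ f)⁻¹ = (k + t) / n * ((1 - x) * (1 - x ^ f)⁻¹) := by
        simp only [x]
        field_simp
        ring
    _ ≤ 1 * ((1 - x) * (1 - x ^ f)⁻¹) :=
        mul_le_mul_of_nonneg_right ((div_le_one hn).2 hkt) hrate_nonneg
    _ ≤ (1 - k / n) * (1 - (k / n) ^ f)⁻¹ := by
        rw [one_mul]
        exact one_sub_mul_inv_one_sub_pow_le (by positivity)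
          (div_le_div_of_nonneg_left hk.le (by linarith) hkt) hx hf
    _ = (n - k) / n * (1 - (k / n) ^ f)⁻¹ := by rw [one_sub_div hn.ne']

end GeometricRate

section MinDist

variable {F : Type*} [Field F] {n : ℕ}

noncomputable def minDist (C : Submodule F (Fin n → F)) : ℕ :=
  sInf {w | ∃ x ∈ C, x ≠ 0 ∧ w = Set.ncard {j | x j ≠ 0}}

theorem minDist_pos {C : Submodule F (Fin n → F)} (hC : 0 < finrank F C) : 0 < minDist C := by
  obtain ⟨x, hxC, hx0⟩ :=
    Submodule.exists_mem_ne_zero_of_ne_bot (mt Submodule.finrank_eq_zero.2 hC.ne')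
  obtain ⟨y, -, hy0, hw⟩ : minDist C ∈ {w | ∃ x ∈ C, x ≠ 0 ∧ w = Set.ncard {j | x j ≠ 0}} :=
    Nat.sInf_mem ⟨_, x, hxC, hx0, rfl⟩
  rw [hw]
  exact (Set.ncard_pos).2 (Function.ne_iff.1 hy0)

theorem exists_mem_ne_zero_vanishing_on_of_card_lt (C : Submodule F (Fin n → F))
    {S : Finset (Fin n)} (hS : #S < finrank F C) :
    ∃ x ∈ C, x ≠ 0 ∧ ∀ j ∈ S, x j = 0 := by
  let restrict : C →ₗ[F] (S → F) :=
    LinearMap.funLeft F F (Subtype.val : S → Fin n) ∘ₗ C.subtype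
  have hker : LinearMap.ker restrict ≠ ⊥ :=
    LinearMap.ker_ne_bot_of_finrank_lt (by simpa using hS)
  obtain ⟨x, hx, hx0⟩ := Submodule.exists_mem_ne_zero_of_ne_bot hker
  exact ⟨x, x.2, fun h => hx0 (Subtype.ext h), fun j hj => congrFun hx ⟨j, hj⟩⟩

theorem minDist_add_finrank_le {C : Submodule F (Fin n → F)} (hC : 0 < finrank F C) :
    minDist C + finrank F C ≤ n + 1 := by
  have hCn : finrank F C ≤ n := by simpa using C.finrank_le
  obtain ⟨S, -, hS⟩ := (univ : Finset (Fin n)).exists_subset_card_eq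
    (show finrank F C - 1 ≤ #univ by rw [card_univ, Fintype.card_fin]; omega)
  obtain ⟨x, hxC, hx0, hxS⟩ := exists_mem_ne_zero_vanishing_on_of_card_lt C (S := S) (by omega)
  have hsupp : {j | x j ≠ 0} ⊆ ↑Sᶜ := fun j hj => by
    simpa using mt (hxS j) hj
  have : minDist C ≤ n - (finrank F C - 1) :=
    calc minDist C ≤ Set.ncard {j | x j ≠ 0} := Nat.sInf_le ⟨x, hxC, hx0, rfl⟩
      _ ≤ (↑Sᶜ : Set (Fin n)).ncard := Set.ncard_le_ncard hsupp
      _ = n - (finrank F C - 1) := by rw [Set.ncard_coe_finset, card_compl, Fintype.card_fin, hS]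
  omega

end MinDist

theorem pir_rate_lower_bound_le_capacity_general {F : Type*} [Field F] {n k d : ℕ}
    (C : Submodule F (Fin n → F)) (hk : Module.finrank F C = k)
    (hk1 : 1 ≤ k)
    (hd : d = sInf {w | ∃ x ∈ C, x ≠ 0 ∧ w = Set.ncard {j | x j ≠ 0}}) :
    ∀ f : ℕ, 1 ≤ f →
      ((min k (d - 1) : ℝ) / n) *
          (1 - ((k : ℝ) / (k + min k (d - 1))) ^ f)⁻¹ ≤
        ((n : ℝ) - k) / n * (1 - ((k : ℝ) / n) ^ f)⁻¹ := by
  intro f hf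
  have hC : 0 < finrank F C := hk ▸ hk1
  have hd1 : 1 ≤ d := hd ▸ minDist_pos hC
  have hsingleton : d + k ≤ n + 1 := hd ▸ hk ▸ minDist_add_finrank_le hC
  have hmin : min (k : ℝ) (d - 1) = ((min k (d - 1) : ℕ) : ℝ) := by
    rw [Nat.cast_min, Nat.cast_sub hd1, Nat.cast_one]
  rw [hmin]
  exact div_mul_inv_one_sub_pow_le_of_add_le (by exact_mod_cast hk1) (Nat.cast_nonneg _)
    (by exact_mod_cast (show k + min k (d - 1) ≤ n by omega)) (by omega)

/-- for an `[n,k,d]` code, the PIR rate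
`(min(k,d−1)/n)·(1−(k/(k+min(k,d−1)))^f)⁻¹` is at most the MDS-PIR capacity
`((n−k)/n)·(1−(k/n)^f)⁻¹`, for all `f ≥ 1`. -/
theorem pir_rate_lower_bound_le_capacity {F : Type*} [Field F] {n k d : ℕ}
    (C : Submodule F (Fin n → F)) (hk : Module.finrank F C = k)
    (hk1 : 1 ≤ k) (hkn : k ≤ n)
    (hd : d = sInf {w | ∃ x ∈ C, x ≠ 0 ∧ w = Set.ncard {j | x j ≠ 0}}) :
    ∀ f : ℕ, 1 ≤ f →
      ((min k (d - 1) : ℝ) / n) *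
          (1 - ((k : ℝ) / (k + min k (d - 1))) ^ f)⁻¹ ≤
        ((n : ℝ) - k) / n * (1 - ((k : ℝ) / n) ^ f)⁻¹ :=
  pir_rate_lower_bound_le_capacity_general C hk hk1 hd
end
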